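/- Let g ∈ L²(ℝ) and a,b > 0, and suppose g vanishes almost everywhere outside an interval I of length |I| ≤ 1/b. If {E_{mb}T_{na}g}_{m,n∈ℤ} is a frame sequence with lower frame bound A, then G(x) = ∑_{n∈ℤ}|g(x−na)|² ≥ bA for almost every x ∈ ℝ − N_G. -/

import Mathlib

/-!
On the cell `J = (c, c + 1/b]` carrying `g`, the exponentials `x ↦ e^{2πimbx}` are, after scaling
by `√b`, an orthonormal basis of `L²(J)`. Parseval, applied for each `n` to `f̄ · T_{na}g`,
bounds the frame coefficients of any `f` supported in `J`:
`∑_{m,n} |⟨f, E_{mb}T_{na}g⟩|² ≤ (1/b) ∫ |f|² G`.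
If `G < bA` on a non-null set `Δ` where `g ≠ 0`, then `f = 1_Δ g` violates the lower frame bound,
provided `f` lies in the closed span of the system. It does: `1_Δ g = (χ ∘ π) g` for a function `χ`
on the circle `ℝ/(1/b)ℤ`, and `u ↦ (u ∘ π) g` is an isometry into `L²(ℝ)` from `L²` of the measure
`|g|² dx` folded onto that circle, in which trigonometric polynomials are dense; it maps them to
combinations of the `E_{mb} g`. Since `G` is `a`-periodic, the bound on the cell spreads to almost
every `x` with `G(x) ≠ 0`.
-/

noncomputable section
open MeasureTheory Complex Filter Set
open scoped ENNReal NNReal ComplexConjugate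

/-- The Weyl–Heisenberg system function `E_{mb} T_{na} g`,
`x ↦ e^{2πi m b x} g (x - n a)`. -/
def whFun (g : ℝ → ℂ) (a b : ℝ) (m n : ℤ) : ℝ → ℂ := fun x =>
  Complex.exp (2 * Real.pi * Complex.I * ((m : ℂ) * (b : ℂ)) * (x : ℂ)) * g (x - (n : ℝ) * a)

/-- `G(x) = ∑ₙ |g(x - n a)|²`, as a sum in `[0, ∞]`. -/
def Gfun (g : ℝ → ℂ) (a : ℝ) (x : ℝ) : ℝ≥0∞ :=
  ∑' n : ℤ, (‖g (x - (n : ℝ) * a)‖₊ : ℝ≥0∞) ^ 2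

/-- `v` is a frame for the set `V` with bounds `A, B`:
`A‖f‖² ≤ ∑ᵢ |⟨f, vᵢ⟩|² ≤ B‖f‖²` for all `f ∈ V`. -/
def IsFrameWithFor {H : Type*} [NormedAddCommGroup H] [InnerProductSpace ℂ H]
    {ι : Type*} (v : ι → H) (A B : ℝ) (V : Set H) : Prop :=
  ∀ f ∈ V, A * ‖f‖ ^ 2 ≤ ∑' i, ‖(inner ℂ f (v i) : ℂ)‖ ^ 2 ∧
    ∑' i, ‖(inner ℂ f (v i) : ℂ)‖ ^ 2 ≤ B * ‖f‖ ^ 2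

/-- `v` is a frame sequence with bounds `A, B`: it is a frame for the closure of
the linear span of its range. -/
def IsFrameSeqWith {H : Type*} [NormedAddCommGroup H] [InnerProductSpace ℂ H]
    {ι : Type*} (v : ι → H) (A B : ℝ) : Prop :=
  IsFrameWithFor v A B (closure ((Submodule.span ℂ (Set.range v) : Submodule ℂ H) : Set H))

theorem eLpNorm_two_sq {α : Type*} [MeasurableSpace α] {μ : Measure α} (f : α → ℂ) :
    eLpNorm f 2 μ ^ 2 = ∫⁻ x, ‖f x‖ₑ ^ 2 ∂μ := by
  simpa using eLpNorm_nnreal_pow_eq_lintegral (f := f) (μ := μ) (p := 2) two_ne_zero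

theorem lintegral_enorm_indicator_sq_mul {α : Type*} [MeasurableSpace α] {μ : Measure α}
    {f : α → ℂ} {s : Set α} (hs : MeasurableSet s) (w : α → ℝ≥0∞) :
    ∫⁻ x, ‖s.indicator f x‖ₑ ^ 2 * w x ∂μ = ∫⁻ x in s, ‖f x‖ₑ ^ 2 * w x ∂μ := by
  rw [← lintegral_indicator hs]
  congr 1
  funext x
  by_cases hx : x ∈ s <;> simp [hx]

theorem setLIntegral_mul_lt_const_mul {α : Type*} [MeasurableSpace α] {μ : Measure α}
    {s : Set α} (hs : MeasurableSet s) (hμs : μ s ≠ 0) {u w : α → ℝ≥0∞} (hu : Measurable u)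
    {r : ℝ≥0∞} (hr : r ≠ ∞) (hfin : ∫⁻ x in s, u x ∂μ ≠ ∞)
    (hlt : ∀ x ∈ s, u x ≠ 0 ∧ u x ≠ ∞ ∧ w x < r) :
    ∫⁻ x in s, u x * w x ∂μ < r * ∫⁻ x in s, u x ∂μ := by
  have hpt : ∀ x ∈ s, u x * w x < u x * r := fun x hx =>
    ENNReal.mul_lt_mul_right (hlt x hx).1 (hlt x hx).2.1 (hlt x hx).2.2
  have hconst : ∫⁻ x in s, u x * r ∂μ = r * ∫⁻ x in s, u x ∂μ := by
    rw [lintegral_mul_const' _ _ hr, mul_comm]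
  rw [← hconst]
  refine lintegral_strict_mono (mt Measure.restrict_eq_zero.mp hμs) (hu.mul_const r).aemeasurable
    (ne_top_of_le_ne_top ?_ (setLIntegral_mono (hu.mul_const r) fun x hx => (hpt x hx).le))
    ((ae_restrict_iff' hs).mpr (Eventually.of_forall hpt))
  rw [hconst]
  exact ENNReal.mul_ne_top hr hfin

theorem tsum_sq_norm_eq_toReal {ι : Type*} (z : ι → ℂ) (h : ∑' i, ‖z i‖ₑ ^ 2 ≠ ∞) :
    ∑' i, ‖z i‖ ^ 2 = (∑' i, ‖z i‖ₑ ^ 2).toReal := by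
  rw [ENNReal.tsum_toReal_eq fun i => ne_top_of_le_ne_top h (ENNReal.le_tsum i)]
  simp

theorem inner_toLp_eq_integral {α : Type*} [MeasurableSpace α] {μ : Measure α} {f w : α → ℂ}
    (hf : MemLp f 2 μ) {u : Lp ℂ 2 μ} (hu : u =ᵐ[μ] w) :
    inner ℂ (hf.toLp f) u = ∫ x, conj (f x) * w x ∂μ := by
  rw [L2.inner_def]
  refine integral_congr_ae ?_
  filter_upwards [hf.coeFn_toLp, hu] with x hfx hux
  rw [hfx, hux, RCLike.inner_apply, mul_comm]

section FourierCell

variable {T : ℝ} [hT : Fact (0 < T)] {c : ℝ} {h : ℝ → ℂ}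

theorem integral_fourier_mul_eq_smul_fourierCoeffOn (h0 : ∀ x ∉ Ioc c (c + T), h x = 0) (m : ℤ) :
    ∫ x : ℝ, fourier m (x : AddCircle T) * h x
      = T • fourierCoeffOn (lt_add_of_pos_right c hT.out) h (-m) := by
  rw [fourierCoeffOn_eq_integral, neg_neg, add_sub_cancel_left, smul_smul,
    mul_one_div_cancel hT.out.ne', one_smul, intervalIntegral.integral_of_le (by linarith [hT.out]),
    setIntegral_eq_integral_of_forall_compl_eq_zero fun x hx => by simp [h0 x hx]]
  rfl

theorem hasSum_sq_norm_integral_fourier_mul (hh : MemLp h 2 volume)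
    (h0 : ∀ x ∉ Ioc c (c + T), h x = 0) :
    HasSum (fun m : ℤ => ‖∫ x : ℝ, fourier m (x : AddCircle T) * h x‖ ^ 2)
      (T * ∫ x, ‖h x‖ ^ 2) := by
  have hpars := (hasSum_sq_fourierCoeffOn (lt_add_of_pos_right c hT.out)
    (hh.restrict _)).mul_left (T ^ 2)
  rw [← (Equiv.neg ℤ).hasSum_iff] at hpars
  have hterm : ∀ m : ℤ, ‖∫ x : ℝ, fourier m (x : AddCircle T) * h x‖ ^ 2
      = T ^ 2 * ‖fourierCoeffOn (lt_add_of_pos_right c hT.out) h (-m)‖ ^ 2 := fun m => by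
    rw [integral_fourier_mul_eq_smul_fourierCoeffOn h0, norm_smul, Real.norm_of_nonneg hT.out.le,
      mul_pow]
  have hsum : T * ∫ x, ‖h x‖ ^ 2 = T ^ 2 * ((c + T - c)⁻¹ • ∫ x in c..c + T, ‖h x‖ ^ 2) := by
    rw [add_sub_cancel_left, intervalIntegral.integral_of_le (by linarith [hT.out]),
      setIntegral_eq_integral_of_forall_compl_eq_zero fun x hx => by simp [h0 x hx], smul_eq_mul]
    field_simp [hT.out.ne']
  simp_rw [hterm, hsum]
  exact hpars

theorem tsum_enorm_integral_fourier_mul_sq_le (hh : AEStronglyMeasurable h volume)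
    (h0 : ∀ x ∉ Ioc c (c + T), h x = 0) :
    ∑' m : ℤ, ‖∫ x : ℝ, fourier m (x : AddCircle T) * h x‖ₑ ^ 2
      ≤ ENNReal.ofReal T * ∫⁻ x, ‖h x‖ₑ ^ 2 := by
  by_cases hL2 : MemLp h 2 volume
  · have hsum := hasSum_sq_norm_integral_fourier_mul hL2 h0
    have hsq : ∀ z : ℂ, ‖z‖ₑ ^ 2 = ENNReal.ofReal (‖z‖ ^ 2) := fun z => by
      rw [ENNReal.ofReal_pow (norm_nonneg _), ofReal_norm]
    simp_rw [hsq]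
    rw [← ENNReal.ofReal_tsum_of_nonneg (fun _ => by positivity) hsum.summable, hsum.tsum_eq,
      ENNReal.ofReal_mul hT.out.le, ofReal_integral_eq_lintegral_ofReal
        (hL2.integrable_norm_pow two_ne_zero) (Eventually.of_forall fun x => by positivity)]
  · have hinf : ∫⁻ x, ‖h x‖ₑ ^ 2 = ∞ := by
      rw [← eLpNorm_two_sq, not_lt_top_iff.mp fun hlt => hL2 ⟨hh, hlt⟩, ENNReal.top_pow two_ne_zero]
    rw [hinf, ENNReal.mul_top (ENNReal.ofReal_pos.mpr hT.out).ne']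
    exact le_top

end FourierCell

section FoldedWeight

def foldedWeight (T : ℝ) (g : ℝ → ℂ) : Measure (AddCircle T) :=
  (volume.withDensity fun x => ‖g x‖ₑ ^ 2).map (↑)

variable {T : ℝ} {g : ℝ → ℂ}

theorem isFiniteMeasure_foldedWeight (hg : MemLp g 2 volume) :
    IsFiniteMeasure (foldedWeight T g) := by
  refine ⟨?_⟩
  rw [foldedWeight, Measure.map_apply AddCircle.measurable_mk' MeasurableSet.univ, preimage_univ,
    withDensity_apply _ MeasurableSet.univ, Measure.restrict_univ, ← eLpNorm_two_sq]
  exact ENNReal.pow_lt_top hg.eLpNorm_lt_top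

theorem eLpNorm_comp_mul_eq (hg : Measurable g) {u : AddCircle T → ℂ} (hu : Measurable u) :
    eLpNorm (fun x : ℝ => u x * g x) 2 volume = eLpNorm u 2 (foldedWeight T g) := by
  refine (ENNReal.pow_right_strictMono two_ne_zero).injective ?_
  simp only [eLpNorm_two_sq]
  rw [foldedWeight, lintegral_map (hu.enorm.pow_const 2) AddCircle.measurable_mk',
    lintegral_withDensity_eq_lintegral_mul _ (hg.enorm.pow_const 2)
      (show Measurable fun x : ℝ => ‖u x‖ₑ ^ 2 from
        (hu.comp AddCircle.measurable_mk').enorm.pow_const 2)]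
  simp [mul_pow, mul_comm]

variable [Fact (0 < T)]

theorem exists_mem_span_fourier_eLpNorm_sub_lt (ν : Measure (AddCircle T)) [IsFiniteMeasure ν]
    {v : AddCircle T → ℂ} (hv : MemLp v 2 ν) {ε : ℝ≥0∞} (hε : 0 < ε) :
    ∃ p ∈ Submodule.span ℂ (range (fourier (T := T))), eLpNorm (v - ⇑p) 2 ν < ε := by
  have hdense := (ContinuousMap.toLp_denseRange ℂ ν ℂ (p := 2)
    ENNReal.ofNat_ne_top).topologicalClosure_map_submodule span_fourier_closure_eq_top
  have hmem := hdense ▸ Submodule.mem_top (x := hv.toLp v)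
  rw [← SetLike.mem_coe, Submodule.topologicalClosure_coe] at hmem
  obtain ⟨_, ⟨p, hp, rfl⟩, hdist⟩ := EMetric.mem_closure_iff.mp hmem ε hε
  refine ⟨p, hp, ?_⟩
  rw [Lp.edist_def] at hdist
  rwa [← eLpNorm_congr_ae (hv.coeFn_toLp.sub (ContinuousMap.coeFn_toLp (p := 2) (𝕜 := ℂ) ν p))]

theorem memLp_comp_mul (hg : MemLp g 2 volume) (p : C(AddCircle T, ℂ)) :
    MemLp (fun x : ℝ => p x * g x) 2 volume :=
  hg.mul' (memLp_top_of_bound (p.continuous.comp continuous_quotient_mk').aestronglyMeasurable ‖p‖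
    (Eventually.of_forall fun _ => p.norm_coe_le_norm _))

def circleMulLp (hg : MemLp g 2 volume) : C(AddCircle T, ℂ) →ₗ[ℂ] Lp ℂ 2 (volume : Measure ℝ) where
  toFun p := (memLp_comp_mul hg p).toLp _
  map_add' p q := by
    simp only [ContinuousMap.coe_add, Pi.add_apply, add_mul]
    exact MemLp.toLp_add _ _
  map_smul' r p := by
    simp only [ContinuousMap.coe_smul, Pi.smul_apply, smul_mul_assoc]
    exact MemLp.toLp_const_smul r (memLp_comp_mul hg p)

theorem circleMulLp_fourier (hg : MemLp g 2 volume) {φ : ℤ → Lp ℂ 2 (volume : Measure ℝ)}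
    (hφ : ∀ m, φ m =ᵐ[volume] fun x => fourier m (x : AddCircle T) * g x) (m : ℤ) :
    circleMulLp hg (fourier (T := T) m) = φ m :=
  Lp.ext ((memLp_comp_mul hg _).coeFn_toLp.trans (hφ m).symm)

theorem measurable_liftIoc {c : ℝ} {f : ℝ → ℂ} (hf : Measurable f) :
    Measurable (AddCircle.liftIoc T c f) :=
  (hf.comp measurable_subtype_coe).comp (AddCircle.measurableEquivIoc T c).measurable

theorem indicator_mem_closure_span_fourier_mul {c : ℝ} (hgm : Measurable g) (hg : MemLp g 2 volume)
    (h0 : ∀ x ∉ Ioc c (c + T), g x = 0) {φ : ℤ → Lp ℂ 2 (volume : Measure ℝ)}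
    (hφ : ∀ m, φ m =ᵐ[volume] fun x => fourier m (x : AddCircle T) * g x)
    {Δ : Set ℝ} (hΔ : MeasurableSet Δ) :
    (hg.indicator hΔ).toLp _ ∈ closure (Submodule.span ℂ (range φ) : Set (Lp ℂ 2 volume)) := by
  have := isFiniteMeasure_foldedWeight (T := T) hg
  set v : AddCircle T → ℂ := AddCircle.liftIoc T c (Δ.indicator 1)
  have hv_meas : Measurable v := measurable_liftIoc (measurable_const.indicator hΔ)
  have hv : MemLp v 2 (foldedWeight T g) :=
    MemLp.of_bound hv_meas.aestronglyMeasurable 1 (Eventually.of_forall fun _ =>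
      (norm_indicator_le_norm_self (1 : ℝ → ℂ) _).trans_eq norm_one)
  have hvg : ∀ x : ℝ, v x * g x = Δ.indicator g x := by
    intro x
    by_cases hx : x ∈ Ioc c (c + T)
    · simp only [v, AddCircle.liftIoc_coe_apply hx]
      by_cases hxΔ : x ∈ Δ <;> simp [hxΔ]
    · rw [Set.indicator_apply_eq_zero.mpr fun _ => h0 x hx, h0 x hx, mul_zero]
  rw [EMetric.mem_closure_iff]
  intro ε hε
  obtain ⟨p, hp, hvp⟩ := exists_mem_span_fourier_eLpNorm_sub_lt _ hv hε
  refine ⟨circleMulLp hg p, ?_, ?_⟩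
  · have hmap := Submodule.mem_map_of_mem (f := circleMulLp hg) hp
    have hcomp : ⇑(circleMulLp hg) ∘ fourier = φ := funext (circleMulLp_fourier hg hφ)
    rwa [Submodule.map_span, ← range_comp, hcomp] at hmap
  · rw [circleMulLp, LinearMap.coe_mk, AddHom.coe_mk, Lp.edist_toLp_toLp]
    convert hvp using 1
    rw [← eLpNorm_comp_mul_eq hgm (hv_meas.sub p.continuous.measurable)]
    congr 1
    funext x
    simp [← hvg, sub_mul]

end FoldedWeight

theorem whFun_eq_fourier (g : ℝ → ℂ) (a b : ℝ) (m n : ℤ) (x : ℝ) :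
    whFun g a b m n x = fourier m (x : AddCircle (1 / b)) * g (x - n * a) := by
  rw [whFun, fourier_coe_apply]
  congr 2
  push_cast
  rw [div_div_eq_mul_div, div_one]
  ring

theorem Gfun_eq_tsum_enorm (g : ℝ → ℂ) (a x : ℝ) : Gfun g a x = ∑' n : ℤ, ‖g (x - n * a)‖ₑ ^ 2 :=
  rfl

theorem Gfun_sub_int_mul (g : ℝ → ℂ) (a x : ℝ) (n : ℤ) : Gfun g a (x - n * a) = Gfun g a x := by
  rw [Gfun_eq_tsum_enorm, Gfun_eq_tsum_enorm,
    ← (Equiv.addLeft n).tsum_eq fun i : ℤ => ‖g (x - i * a)‖ₑ ^ 2]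
  simp [sub_sub, add_mul]

theorem measurable_Gfun {g : ℝ → ℂ} (hg : Measurable g) (a : ℝ) : Measurable (Gfun g a) :=
  Measurable.tsum fun _ => (hg.comp (measurable_id.sub_const _)).enorm.pow_const 2

theorem ae_le_Gfun_of_volume_eq_zero {g : ℝ → ℂ} {a : ℝ} {r : ℝ≥0∞}
    (h : volume {x | g x ≠ 0 ∧ Gfun g a x < r} = 0) :
    ∀ᵐ x, Gfun g a x ≠ 0 → r ≤ Gfun g a x := by
  have hshift : ∀ᵐ x, ∀ n : ℤ, x - n * a ∉ {x | g x ≠ 0 ∧ Gfun g a x < r} :=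
    ae_all_iff.mpr fun n => (measurePreserving_sub_right volume (n * a)).quasiMeasurePreserving.ae
      (measure_eq_zero_iff_ae_notMem.mp h)
  filter_upwards [hshift] with x hx hG
  obtain ⟨n, hn⟩ : ∃ n : ℤ, g (x - n * a) ≠ 0 := by
    by_contra! hall
    exact hG (by simp [Gfun_eq_tsum_enorm, hall])
  rw [← Gfun_sub_int_mul g a x n]
  exact not_lt.mp fun hlt => hx n ⟨hn, hlt⟩

theorem ae_eq_comp_sub {g g₀ : ℝ → ℂ} (h : g =ᵐ[volume] g₀) (t : ℝ) :
    (fun x => g (x - t)) =ᵐ[volume] fun x => g₀ (x - t) :=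
  (measurePreserving_sub_right volume t).quasiMeasurePreserving.ae_eq h

theorem Gfun_ae_congr {g g₀ : ℝ → ℂ} (h : g =ᵐ[volume] g₀) (a : ℝ) :
    ∀ᵐ x, Gfun g a x = Gfun g₀ a x := by
  filter_upwards [ae_all_iff.mpr fun n : ℤ => ae_eq_comp_sub h (n * a)] with x hx
  exact tsum_congr fun n => by rw [hx n]

theorem whFun_ae_congr {g g₀ : ℝ → ℂ} (h : g =ᵐ[volume] g₀) (a b : ℝ) (m n : ℤ) :
    whFun g a b m n =ᵐ[volume] whFun g₀ a b m n := by
  filter_upwards [ae_eq_comp_sub h (n * a)] with x hx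
  rw [whFun, whFun, hx]

theorem exists_measurable_ae_eq_eq_zero_outside_Ioc {g : ℝ → ℂ} {c d : ℝ}
    (hg : AEStronglyMeasurable g volume) (h : ∀ᵐ x, x ∉ Icc c d → g x = 0) :
    ∃ g₀ : ℝ → ℂ, Measurable g₀ ∧ g =ᵐ[volume] g₀ ∧ ∀ x ∉ Ioc c d, g₀ x = 0 := by
  refine ⟨(Ioc c d).indicator (hg.mk g), hg.measurable_mk.indicator measurableSet_Ioc, ?_,
    fun x hx => indicator_of_notMem hx _⟩
  filter_upwards [hg.ae_eq_mk, h, measure_eq_zero_iff_ae_notMem.mp (Real.volume_singleton (a := c))]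
    with x hmk hx hxc
  by_cases hxI : x ∈ Ioc c d
  · rw [indicator_of_mem hxI, hmk]
  · rw [indicator_of_notMem hxI]
    exact hx fun hxI' => hxI ⟨lt_of_le_of_ne hxI'.1 (Ne.symm hxc), hxI'.2⟩

theorem tsum_enorm_integral_conj_mul_whFun_sq_le {f g : ℝ → ℂ} {a b c : ℝ} (hb : 0 < b)
    (hf : AEStronglyMeasurable f volume) (hg : AEStronglyMeasurable g volume)
    (hf0 : ∀ x ∉ Ioc c (c + 1 / b), f x = 0) :
    ∑' p : ℤ × ℤ, ‖∫ x, conj (f x) * whFun g a b p.1 p.2 x‖ₑ ^ 2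
      ≤ ENNReal.ofReal (1 / b) * ∫⁻ x, ‖f x‖ₑ ^ 2 * Gfun g a x := by
  have := Fact.mk (one_div_pos.mpr hb)
  have hfibre : ∀ n : ℤ, AEStronglyMeasurable (fun x => conj (f x) * g (x - n * a)) volume :=
    fun n => (continuous_conj.comp_aestronglyMeasurable hf).mul
      (hg.comp_quasiMeasurePreserving (measurePreserving_sub_right volume _).quasiMeasurePreserving)
  calc ∑' p : ℤ × ℤ, ‖∫ x, conj (f x) * whFun g a b p.1 p.2 x‖ₑ ^ 2
      = ∑' (n : ℤ) (m : ℤ), ‖∫ x : ℝ, fourier m (x : AddCircle (1 / b)) *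
          (conj (f x) * g (x - n * a))‖ₑ ^ 2 := by
        rw [ENNReal.tsum_prod (f := fun m n => ‖∫ x, conj (f x) * whFun g a b m n x‖ₑ ^ 2),
          ENNReal.tsum_comm]
        simp only [whFun_eq_fourier, mul_left_comm]
    _ ≤ ∑' n : ℤ, ENNReal.ofReal (1 / b) * ∫⁻ x : ℝ, ‖conj (f x) * g (x - n * a)‖ₑ ^ 2 :=
        ENNReal.tsum_le_tsum fun n => tsum_enorm_integral_fourier_mul_sq_le (c := c)
          (hfibre n) fun x hx => by simp [hf0 x hx]
    _ = ENNReal.ofReal (1 / b) * ∫⁻ x, ‖f x‖ₑ ^ 2 * Gfun g a x := by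
        rw [ENNReal.tsum_mul_left, ← lintegral_tsum fun n => (hfibre n).enorm.pow_const 2]
        simp [Gfun_eq_tsum_enorm, mul_pow, ENNReal.tsum_mul_left]

theorem indicator_mem_closure_span_whFun {g : ℝ → ℂ} (hgm : Measurable g)
    (hg : MemLp g 2 volume) {a b c : ℝ} (hb : 0 < b) (h0 : ∀ x ∉ Ioc c (c + 1 / b), g x = 0)
    {F : ℤ × ℤ → Lp ℂ 2 (volume : Measure ℝ)}
    (hF : ∀ p : ℤ × ℤ, (F p : ℝ → ℂ) =ᵐ[volume] whFun g a b p.1 p.2)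
    {Δ : Set ℝ} (hΔ : MeasurableSet Δ) :
    (hg.indicator hΔ).toLp _ ∈ closure (Submodule.span ℂ (range F) : Set (Lp ℂ 2 volume)) := by
  have := Fact.mk (one_div_pos.mpr hb)
  refine closure_mono (Submodule.span_mono (range_comp_subset_range (fun m : ℤ => (m, 0)) F))
    (indicator_mem_closure_span_fourier_mul hgm hg h0 (fun m => (hF (m, 0)).trans ?_) hΔ)
  exact Eventually.of_forall fun x => by simp [whFun_eq_fourier]

theorem volume_setOf_Gfun_lt_eq_zero {g : ℝ → ℂ} (hgm : Measurable g) (hg : MemLp g 2 volume)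
    {a b A c : ℝ} (hb : 0 < b) (hA : 0 ≤ A) (h0 : ∀ x ∉ Ioc c (c + 1 / b), g x = 0)
    {F : ℤ × ℤ → Lp ℂ 2 (volume : Measure ℝ)}
    (hF : ∀ p : ℤ × ℤ, (F p : ℝ → ℂ) =ᵐ[volume] whFun g a b p.1 p.2)
    {B : ℝ} (hframe : IsFrameSeqWith F A B) :
    volume {x | g x ≠ 0 ∧ Gfun g a x < ENNReal.ofReal (b * A)} = 0 := by
  set Δ := {x | g x ≠ 0 ∧ Gfun g a x < ENNReal.ofReal (b * A)}
  have hΔ : MeasurableSet Δ :=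
    (hgm (measurableSet_singleton 0)).compl.inter (measurable_Gfun hgm a measurableSet_Iio)
  by_contra hpos
  set f := (hg.indicator hΔ).toLp (Δ.indicator g)
  have hmem := indicator_mem_closure_span_whFun hgm hg hb h0 hF hΔ
  set N := ∫⁻ x in Δ, ‖g x‖ₑ ^ 2
  have hN : N ≠ ∞ := by
    refine ne_top_of_le_ne_top ?_ (setLIntegral_le_lintegral _ _)
    rw [← eLpNorm_two_sq]
    exact ENNReal.pow_ne_top hg.eLpNorm_ne_top
  have hupper : ∑' p, ‖inner ℂ f (F p)‖ₑ ^ 2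
      ≤ ENNReal.ofReal (1 / b) * ∫⁻ x in Δ, ‖g x‖ₑ ^ 2 * Gfun g a x := by
    have hinner : ∀ p, inner ℂ f (F p) = ∫ x, conj (Δ.indicator g x) * whFun g a b p.1 p.2 x :=
      fun p => inner_toLp_eq_integral _ (hF p)
    simp_rw [hinner, ← lintegral_enorm_indicator_sq_mul hΔ]
    exact tsum_enorm_integral_conj_mul_whFun_sq_le hb (hgm.indicator hΔ).aestronglyMeasurable
      hgm.aestronglyMeasurable fun x hx => indicator_of_notMem (fun hxΔ => hxΔ.1 (h0 x hx)) g
  have hstrict : ∫⁻ x in Δ, ‖g x‖ₑ ^ 2 * Gfun g a x < ENNReal.ofReal (b * A) * N :=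
    setLIntegral_mul_lt_const_mul hΔ hpos (hgm.enorm.pow_const 2) ENNReal.ofReal_ne_top hN
      fun x hx => ⟨by simpa using hx.1, by simp, hx.2⟩
  have hlt : ∑' p, ‖inner ℂ f (F p)‖ₑ ^ 2 < ENNReal.ofReal A * N := calc
    _ ≤ _ := hupper
    _ < ENNReal.ofReal (1 / b) * (ENNReal.ofReal (b * A) * N) :=
      ENNReal.mul_lt_mul_right (by simpa using hb) ENNReal.ofReal_ne_top hstrict
    _ = ENNReal.ofReal A * N := by
      rw [← mul_assoc, ← ENNReal.ofReal_mul (by positivity), ← mul_assoc, one_div_mul_cancel hb.ne',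
        one_mul]
  have hlow := (hframe f hmem).1
  rw [Lp.norm_toLp, ← ENNReal.toReal_pow, eLpNorm_indicator_eq_eLpNorm_restrict hΔ, eLpNorm_two_sq,
    tsum_sq_norm_eq_toReal _ (hlt.trans_le le_top).ne] at hlow
  have := ENNReal.toReal_strict_mono (ENNReal.mul_ne_top ENNReal.ofReal_ne_top hN) hlt
  rw [ENNReal.toReal_mul, ENNReal.toReal_ofReal hA] at this
  linarith

theorem wh_compact_support_lower_necessary_general
    (g : ℝ → ℂ) (hg : MemLp g 2 (volume : Measure ℝ)) (a b A : ℝ)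
    (hb : 0 < b) (hA : 0 < A)
    (hsupp : ∃ c d : ℝ, d - c ≤ 1 / b ∧ ∀ᵐ x : ℝ, x ∉ Set.Icc c d → g x = 0)
    (F : ℤ × ℤ → Lp ℂ 2 (volume : Measure ℝ))
    (hF : ∀ p : ℤ × ℤ, (F p : ℝ → ℂ) =ᵐ[volume] whFun g a b p.1 p.2)
    (hframe : ∃ B : ℝ, 0 < B ∧ IsFrameSeqWith F A B) :
    ∀ᵐ x : ℝ, Gfun g a x ≠ 0 → ENNReal.ofReal (b * A) ≤ Gfun g a x := by
  obtain ⟨B, -, hframe⟩ := hframe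
  obtain ⟨c, d, hdc, hsupp⟩ := hsupp
  obtain ⟨g₀, hg₀m, hgg₀, hg₀⟩ := exists_measurable_ae_eq_eq_zero_outside_Ioc hg.1 hsupp
  have hg₀cell : ∀ x ∉ Ioc c (c + 1 / b), g₀ x = 0 :=
    fun x hx => hg₀ x fun hxd => hx ⟨hxd.1, hxd.2.trans (by linarith)⟩
  have hF₀ : ∀ p : ℤ × ℤ, (F p : ℝ → ℂ) =ᵐ[volume] whFun g₀ a b p.1 p.2 :=
    fun p => (hF p).trans (whFun_ae_congr hgg₀ a b p.1 p.2)
  have hnull := volume_setOf_Gfun_lt_eq_zero hg₀m (hg.ae_eq hgg₀) hb hA.le hg₀cell hF₀ hframe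
  filter_upwards [Gfun_ae_congr hgg₀ a, ae_le_Gfun_of_volume_eq_zero hnull] with x hx hx₀
  rw [hx]
  exact hx₀

/-- **Corollary 2.2 (necessity of the lower bound)**. If `g` vanishes a.e. outside an
interval of length `≤ 1/b` and `{E_{mb} T_{na} g}` is a frame sequence with lower
frame bound `A`, then `G(x) ≥ bA` for a.e. `x ∈ ℝ - N_G`. -/
theorem wh_compact_support_lower_necessary
    (g : ℝ → ℂ) (hg : MemLp g 2 (volume : Measure ℝ)) (a b A : ℝ)
    (ha : 0 < a) (hb : 0 < b) (hA : 0 < A)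
    (hsupp : ∃ c d : ℝ, d - c ≤ 1 / b ∧ ∀ᵐ x : ℝ, x ∉ Set.Icc c d → g x = 0)
    (F : ℤ × ℤ → Lp ℂ 2 (volume : Measure ℝ))
    (hF : ∀ p : ℤ × ℤ, (F p : ℝ → ℂ) =ᵐ[volume] whFun g a b p.1 p.2)
    (hframe : ∃ B : ℝ, 0 < B ∧ IsFrameSeqWith F A B) :
    ∀ᵐ x : ℝ, Gfun g a x ≠ 0 → ENNReal.ofReal (b * A) ≤ Gfun g a x :=
  wh_compact_support_lower_necessary_general g hg a b A hb hA hsupp F hF hframe
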